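/- Let L > 0 and p ∈ (0,1), and let s₀ ∈ ℝ satisfy p = 1 − L · ∫_{s₀}^{s₀ + 1/L} Φ(s) ds. Then for every L-Lipschitz function g : ℝ → [0,1] with ∫_ℝ g(s) φ(s) ds = p, the objective satisfies ∫_ℝ s · g(s) · φ(s) ds ≤ L · (Φ(s₀ + 1/L) − Φ(s₀)). -/

import Mathlib

open MeasureTheory Real

/-- Standard normal density `φ`. -/
noncomputable def stdGaussPDF (t : ℝ) : ℝ :=
  (Real.sqrt (2 * π))⁻¹ * Real.exp (-t ^ 2 / 2)

/-- Standard normal cumulative distribution function `Φ`. -/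
noncomputable def stdGaussCDF (x : ℝ) : ℝ := ∫ t in Set.Iic x, stdGaussPDF t

/-!
The maximiser is the ramp `h(s) = max 0 (min 1 (L (s - s₀)))`, whose mass `∫ h φ` equals `p`
by the choice of `s₀`. An `L`-Lipschitz `g` with values in `[0, 1]` meets the line `L (s - s₀)`
at some point `c`, and the Lipschitz bound then forces `g ≥ h` left of `c` and `g ≤ h` right of
`c`. As the masses agree, `∫ s (g - h) φ = ∫ (s - c) (g - h) φ ≤ 0`, and integrating by parts
on the ramp gives `∫ s h φ = L (Φ(s₀ + 1/L) - Φ(s₀))`.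
-/

open Set Filter Topology

lemma stdGaussPDF_eq_gaussianPDFReal : stdGaussPDF = ProbabilityTheory.gaussianPDFReal 0 1 := by
  ext t
  simp [stdGaussPDF, ProbabilityTheory.gaussianPDFReal]

lemma stdGaussPDF_pos (t : ℝ) : 0 < stdGaussPDF t := by
  unfold stdGaussPDF; positivity

lemma continuous_stdGaussPDF : Continuous stdGaussPDF := by
  unfold stdGaussPDF; fun_prop

lemma integrable_stdGaussPDF : Integrable stdGaussPDF := by
  rw [stdGaussPDF_eq_gaussianPDFReal]
  exact ProbabilityTheory.integrable_gaussianPDFReal 0 1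

lemma integral_stdGaussPDF : ∫ t, stdGaussPDF t = 1 := by
  rw [stdGaussPDF_eq_gaussianPDFReal]
  exact ProbabilityTheory.integral_gaussianPDFReal_eq_one 0 one_ne_zero

lemma integrable_id_mul_stdGaussPDF : Integrable fun t => t * stdGaussPDF t := by
  convert (integrable_mul_exp_neg_mul_sq (b := 1 / 2) (by norm_num)).const_mul
    (√(2 * π))⁻¹ using 2 with t
  unfold stdGaussPDF
  ring_nf

lemma hasDerivAt_stdGaussPDF (t : ℝ) : HasDerivAt stdGaussPDF (-t * stdGaussPDF t) t := by
  have h : HasDerivAt (fun t : ℝ => -t ^ 2 / 2) (-t) t :=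
    ((hasDerivAt_pow 2 t).neg.div_const 2).congr_deriv (by push_cast; ring)
  unfold stdGaussPDF
  exact (h.exp.const_mul _).congr_deriv (by ring)

lemma tendsto_stdGaussPDF_atTop : Tendsto stdGaussPDF atTop (𝓝 0) := by
  have h : Tendsto (fun t : ℝ => -t ^ 2 / 2) atTop atBot :=
    tendsto_neg_atBot_iff.mpr ((tendsto_pow_atTop two_ne_zero).atTop_div_const two_pos) |>.congr
      fun t => by ring
  have := (tendsto_exp_atBot.comp h).const_mul (√(2 * π))⁻¹
  rwa [mul_zero] at this

lemma intervalIntegral_stdGaussPDF (a b : ℝ) :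
    ∫ t in a..b, stdGaussPDF t = stdGaussCDF b - stdGaussCDF a :=
  (intervalIntegral.integral_Iic_sub_Iic integrable_stdGaussPDF.integrableOn
    integrable_stdGaussPDF.integrableOn).symm

lemma hasDerivAt_stdGaussCDF (x : ℝ) : HasDerivAt stdGaussCDF (stdGaussPDF x) x := by
  have h : HasDerivAt (fun y => stdGaussCDF 0 + ∫ t in (0 : ℝ)..y, stdGaussPDF t)
      (stdGaussPDF x) x :=
    (intervalIntegral.integral_hasDerivAt_right integrable_stdGaussPDF.intervalIntegrable
      (continuous_stdGaussPDF.stronglyMeasurableAtFilter _ _)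
      continuous_stdGaussPDF.continuousAt).const_add _
  refine h.congr_of_eventuallyEq (Eventually.of_forall fun y => ?_)
  simp [intervalIntegral_stdGaussPDF]

lemma integral_Ioi_stdGaussPDF (b : ℝ) : ∫ t in Ioi b, stdGaussPDF t = 1 - stdGaussCDF b := by
  rw [← integral_stdGaussPDF, ← intervalIntegral.integral_Iic_add_Ioi
    integrable_stdGaussPDF.integrableOn integrable_stdGaussPDF.integrableOn, stdGaussCDF]
  ring

lemma integral_Ioi_id_mul_stdGaussPDF (b : ℝ) :
    ∫ t in Ioi b, t * stdGaussPDF t = stdGaussPDF b := by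
  rw [integral_Ioi_of_hasDerivAt_of_tendsto (f := -stdGaussPDF)
    continuous_stdGaussPDF.neg.continuousWithinAt
    (fun t _ => by simpa only [neg_mul, neg_neg] using (hasDerivAt_stdGaussPDF t).neg)
    integrable_id_mul_stdGaussPDF.integrableOn
    (neg_zero (G := ℝ) ▸ tendsto_stdGaussPDF_atTop.neg)]
  simp

lemma intervalIntegral_sub_mul_stdGaussPDF (a b : ℝ) :
    ∫ s in a..b, (s - a) * stdGaussPDF s
      = (b - a) * stdGaussCDF b - ∫ s in a..b, stdGaussCDF s := by
  rw [intervalIntegral.integral_mul_deriv_eq_deriv_mul (u := fun s => s - a) (u' := fun _ => 1)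
    (fun s _ => by simpa using (hasDerivAt_id s).sub_const a) (fun s _ => hasDerivAt_stdGaussCDF s)
    intervalIntegrable_const (continuous_stdGaussPDF.intervalIntegrable a b)]
  simp

lemma intervalIntegral_sub_mul_id_mul_stdGaussPDF (a b : ℝ) :
    ∫ s in a..b, (s - a) * (s * stdGaussPDF s) =
      stdGaussCDF b - stdGaussCDF a - (b - a) * stdGaussPDF b := by
  rw [intervalIntegral.integral_mul_deriv_eq_deriv_mul (u := fun s => s - a) (u' := fun _ => 1)
    (v := -stdGaussPDF)
    (fun s _ => by simpa using (hasDerivAt_id s).sub_const a)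
    (fun s _ => by simpa only [neg_mul, neg_neg] using (hasDerivAt_stdGaussPDF s).neg)
    intervalIntegrable_const (integrable_id_mul_stdGaussPDF.intervalIntegrable)]
  simp only [Pi.neg_apply, mul_neg, sub_self, zero_mul, neg_zero, sub_zero, one_mul,
    intervalIntegral.integral_neg, intervalIntegral_stdGaussPDF, neg_sub]
  ring

lemma integral_eq_integral_Iic_add_intervalIntegral_add_integral_Ioi {f : ℝ → ℝ}
    (hf : Integrable f) (a b : ℝ) :
    ∫ x, f x = (∫ x in Iic a, f x) + (∫ x in a..b, f x) + ∫ x in Ioi b, f x := by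
  rw [← intervalIntegral.integral_Iic_add_Ioi hf.integrableOn hf.integrableOn (b := b),
    ← intervalIntegral.integral_Iic_sub_Iic (μ := volume) hf.integrableOn hf.integrableOn]
  ring

lemma integrable_mul_of_mem_Icc {f g : ℝ → ℝ} (hf : Integrable f) (hg : Continuous g)
    (hg01 : ∀ s, g s ∈ Icc (0 : ℝ) 1) : Integrable fun s => g s * f s :=
  hf.bdd_mul (c := 1) hg.aestronglyMeasurable <| ae_of_all _ fun s => by
    rw [norm_eq_abs, abs_le]
    constructor <;> linarith [(hg01 s).1, (hg01 s).2]

lemma integral_id_mul_le_of_sign_change {μ : Measure ℝ} {G H : ℝ → ℝ} (c : ℝ)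
    (hG : Integrable G μ) (hH : Integrable H μ)
    (hsG : Integrable (fun s => s * G s) μ) (hsH : Integrable (fun s => s * H s) μ)
    (hmass : ∫ s, G s ∂μ = ∫ s, H s ∂μ) (hsign : ∀ s, (s - c) * (G s - H s) ≤ 0) :
    ∫ s, s * G s ∂μ ≤ ∫ s, s * H s ∂μ := by
  have hdiff : ∫ s, (s - c) * (G s - H s) ∂μ
      = (∫ s, s * G s ∂μ - ∫ s, s * H s ∂μ) - c * (∫ s, G s ∂μ - ∫ s, H s ∂μ) := by
    have hpt : ∀ s, (s - c) * (G s - H s) = (s * G s - s * H s) - c * (G s - H s) := by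
      intro s; ring
    simp only [hpt]
    rw [integral_sub (f := fun s => s * G s - s * H s) (g := fun s => c * (G s - H s))
        (hsG.sub hsH) ((hG.sub hH).const_mul c), integral_sub hsG hsH,
      integral_const_mul, integral_sub hG hH]
  have := integral_nonpos (μ := μ) hsign
  rw [hdiff, hmass, sub_self, mul_zero, sub_zero] at this
  linarith

def ramp (L a s : ℝ) : ℝ := max 0 (min 1 (L * (s - a)))

section Ramp

variable {L : ℝ} (a : ℝ)

lemma ramp_mem_Icc (s : ℝ) : ramp L a s ∈ Icc (0 : ℝ) 1 :=
  ⟨le_max_left _ _, max_le zero_le_one (min_le_left _ _)⟩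

lemma continuous_ramp : Continuous (ramp L a) := by
  unfold ramp; fun_prop

variable {a}

lemma ramp_eq_zero_of_le (hL : 0 ≤ L) {s : ℝ} (hs : s ≤ a) : ramp L a s = 0 :=
  max_eq_left (min_le_of_right_le (mul_nonpos_of_nonneg_of_nonpos hL (sub_nonpos.2 hs)))

lemma ramp_eq_of_mem_Icc (hL : 0 < L) {s : ℝ} (hs : s ∈ Icc a (a + 1 / L)) :
    ramp L a s = L * (s - a) := by
  have h1 : L * (s - a) ≤ 1 := by
    have := mul_le_mul_of_nonneg_left (sub_le_iff_le_add'.2 hs.2) hL.le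
    rwa [mul_one_div_cancel hL.ne'] at this
  rw [ramp, min_eq_right h1, max_eq_right (mul_nonneg hL.le (sub_nonneg.2 hs.1))]

lemma ramp_eq_one_of_le (hL : 0 < L) {s : ℝ} (hs : a + 1 / L ≤ s) : ramp L a s = 1 := by
  have h1 : 1 ≤ L * (s - a) := by
    have := mul_le_mul_of_nonneg_left (le_sub_iff_add_le'.2 hs) hL.le
    rwa [mul_one_div_cancel hL.ne'] at this
  rw [ramp, min_eq_left h1, max_eq_right zero_le_one]

variable (a)

lemma integral_ramp_mul (hL : 0 < L) {f : ℝ → ℝ} (hf : Integrable f) :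
    ∫ s, ramp L a s * f s
      = L * (∫ s in a..a + 1 / L, (s - a) * f s) + ∫ s in Ioi (a + 1 / L), f s := by
  have hab : a ≤ a + 1 / L := le_add_of_nonneg_right (by positivity)
  have hleft : ∫ s in Iic a, ramp L a s * f s = 0 :=
    setIntegral_eq_zero_of_forall_eq_zero fun s hs => by
      rw [ramp_eq_zero_of_le hL.le hs, zero_mul]
  have hmid : ∫ s in a..a + 1 / L, ramp L a s * f s = L * ∫ s in a..a + 1 / L, (s - a) * f s := by
    rw [← intervalIntegral.integral_const_mul]
    refine intervalIntegral.integral_congr fun s hs => ?_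
    rw [uIcc_of_le hab] at hs
    simp only [ramp_eq_of_mem_Icc hL hs, mul_assoc]
  have hright : ∫ s in Ioi (a + 1 / L), ramp L a s * f s = ∫ s in Ioi (a + 1 / L), f s :=
    setIntegral_congr_fun measurableSet_Ioi fun s hs => by
      rw [ramp_eq_one_of_le hL hs.le, one_mul]
  rw [integral_eq_integral_Iic_add_intervalIntegral_add_integral_Ioi
    (integrable_mul_of_mem_Icc hf (continuous_ramp a) (ramp_mem_Icc a)) a (a + 1 / L),
    hleft, hmid, hright, zero_add]

lemma integral_ramp_mul_stdGaussPDF (hL : 0 < L) :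
    ∫ s, ramp L a s * stdGaussPDF s = 1 - L * ∫ s in a..a + 1 / L, stdGaussCDF s := by
  rw [integral_ramp_mul a hL integrable_stdGaussPDF, intervalIntegral_sub_mul_stdGaussPDF a,
    integral_Ioi_stdGaussPDF, add_sub_cancel_left]
  field_simp
  ring

lemma integral_ramp_mul_id_mul_stdGaussPDF (hL : 0 < L) :
    ∫ s, ramp L a s * (s * stdGaussPDF s)
      = L * (stdGaussCDF (a + 1 / L) - stdGaussCDF a) := by
  rw [integral_ramp_mul a hL integrable_id_mul_stdGaussPDF,
    intervalIntegral_sub_mul_id_mul_stdGaussPDF a, integral_Ioi_id_mul_stdGaussPDF,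
    add_sub_cancel_left]
  field_simp
  ring

end Ramp

section Crossing

variable {g : ℝ → ℝ} {L : ℝ}

lemma continuous_of_abs_sub_le (hlip : ∀ s s', |g s - g s'| ≤ L * |s - s'|) : Continuous g :=
  (LipschitzWith.of_dist_le_mul (K := L.toNNReal) fun s s' =>
    (hlip s s').trans (mul_le_mul_of_nonneg_right (le_coe_toNNReal L) (abs_nonneg _))).continuous

lemma exists_eq_mul_sub (hL : 0 < L) (hg : Continuous g) (hrange : ∀ s, g s ∈ Icc (0 : ℝ) 1)
    (a : ℝ) : ∃ c, g c = L * (c - a) := by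
  have hab : a ≤ a + 1 / L := le_add_of_nonneg_right (by positivity)
  have h0 : (0 : ℝ) ∈ Icc (g (a + 1 / L) - L * (a + 1 / L - a)) (g a - L * (a - a)) := by
    rw [add_sub_cancel_left, mul_one_div_cancel hL.ne', sub_self, mul_zero, sub_zero]
    exact ⟨sub_nonpos.2 (hrange _).2, (hrange a).1⟩
  obtain ⟨c, -, hc⟩ := intermediate_value_Icc' (f := fun s => g s - L * (s - a)) hab
    (by fun_prop) h0
  exact ⟨c, sub_eq_zero.1 hc⟩

lemma sub_mul_sub_ramp_nonpos (hrange : ∀ s, g s ∈ Icc (0 : ℝ) 1)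
    (hlip : ∀ s s', |g s - g s'| ≤ L * |s - s'|) {a c : ℝ} (hc : g c = L * (c - a)) (s : ℝ) :
    (s - c) * (g s - ramp L a s) ≤ 0 := by
  have hgs := abs_le.1 (hlip s c)
  rcases le_total s c with hsc | hcs
  · have hline : L * (s - a) ≤ g s := by
      have := hgs.1
      rw [abs_of_nonpos (sub_nonpos.2 hsc)] at this
      linarith
    have : ramp L a s ≤ g s :=
      max_le (hrange s).1 ((min_le_right _ _).trans hline)
    exact mul_nonpos_of_nonpos_of_nonneg (sub_nonpos.2 hsc) (sub_nonneg.2 this)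
  · have hline : g s ≤ L * (s - a) := by
      have := hgs.2
      rw [abs_of_nonneg (sub_nonneg.2 hcs)] at this
      linarith
    have : g s ≤ ramp L a s := (le_min (hrange s).2 hline).trans (le_max_right _ _)
    exact mul_nonpos_of_nonneg_of_nonpos (sub_nonneg.2 hcs) (sub_nonpos.2 this)

end Crossing

lemma integrable_mul_stdGaussPDF {g : ℝ → ℝ} (hg : Continuous g)
    (hrange : ∀ s, g s ∈ Icc (0 : ℝ) 1) : Integrable fun s => g s * stdGaussPDF s :=
  integrable_mul_of_mem_Icc integrable_stdGaussPDF hg hrange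

lemma integrable_id_mul_mul_stdGaussPDF {g : ℝ → ℝ} (hg : Continuous g)
    (hrange : ∀ s, g s ∈ Icc (0 : ℝ) 1) : Integrable fun s => s * (g s * stdGaussPDF s) :=
  (integrable_mul_of_mem_Icc integrable_id_mul_stdGaussPDF hg hrange).congr
    (ae_of_all _ fun _ => mul_left_comm _ _ _)

theorem onedim_control_value_bound_general (L p s₀ : ℝ) (hL : 0 < L)
    (hs₀ : p = 1 - L * ∫ s in s₀..(s₀ + 1 / L), stdGaussCDF s)
    (g : ℝ → ℝ)
    (hrange : ∀ s, g s ∈ Set.Icc (0 : ℝ) 1)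
    (hlip : ∀ s s', |g s - g s'| ≤ L * |s - s'|)
    (hmass : ∫ s, g s * stdGaussPDF s = p) :
    ∫ s, s * g s * stdGaussPDF s
      ≤ L * (stdGaussCDF (s₀ + 1 / L) - stdGaussCDF s₀) := by
  have hg := continuous_of_abs_sub_le hlip
  have hramp := continuous_ramp (L := L) s₀
  obtain ⟨c, hc⟩ := exists_eq_mul_sub hL hg hrange s₀
  have hsign : ∀ s, (s - c) * (g s * stdGaussPDF s - ramp L s₀ s * stdGaussPDF s) ≤ 0 :=
    fun s => by
      rw [← sub_mul, ← mul_assoc]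
      exact mul_nonpos_of_nonpos_of_nonneg (sub_mul_sub_ramp_nonpos hrange hlip hc s)
        (stdGaussPDF_pos s).le
  calc ∫ s, s * g s * stdGaussPDF s = ∫ s, s * (g s * stdGaussPDF s) := by
        simp only [mul_assoc]
    _ ≤ ∫ s, s * (ramp L s₀ s * stdGaussPDF s) :=
        integral_id_mul_le_of_sign_change c (integrable_mul_stdGaussPDF hg hrange)
          (integrable_mul_stdGaussPDF hramp (ramp_mem_Icc s₀))
          (integrable_id_mul_mul_stdGaussPDF hg hrange)
          (integrable_id_mul_mul_stdGaussPDF hramp (ramp_mem_Icc s₀))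
          (by rw [hmass, hs₀, integral_ramp_mul_stdGaussPDF s₀ hL]) hsign
    _ = L * (stdGaussCDF (s₀ + 1 / L) - stdGaussCDF s₀) := by
        simp only [mul_left_comm _ (ramp L s₀ _)]
        exact integral_ramp_mul_id_mul_stdGaussPDF s₀ hL

/-- **Value bound of the one-dimensional optimal control problem.** If `s₀` solves
`p = 1 - L ∫_{s₀}^{s₀+1/L} Φ(s) ds`, then every `L`-Lipschitz `g : ℝ → [0,1]` with
`∫ g φ = p` satisfies `∫ s g(s) φ(s) ds ≤ L (Φ(s₀ + 1/L) - Φ(s₀))`. -/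
theorem onedim_control_value_bound (L p s₀ : ℝ) (hL : 0 < L)
    (hp : p ∈ Set.Ioo (0 : ℝ) 1)
    (hs₀ : p = 1 - L * ∫ s in s₀..(s₀ + 1 / L), stdGaussCDF s)
    (g : ℝ → ℝ)
    (hrange : ∀ s, g s ∈ Set.Icc (0 : ℝ) 1)
    (hlip : ∀ s s', |g s - g s'| ≤ L * |s - s'|)
    (hmass : ∫ s, g s * stdGaussPDF s = p) :
    ∫ s, s * g s * stdGaussPDF s
      ≤ L * (stdGaussCDF (s₀ + 1 / L) - stdGaussCDF s₀) :=
  onedim_control_value_bound_general L p s₀ hL hs₀ g hrange hlip hmass
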